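/- Let E and G be f-invariant subspaces of V with V = E ⊕ G such that d(f|_E, t) = d(f, t) whenever d(f, t) = 1 and d(f|_G, t) = d(f, t) whenever d(f, t) > 1. Let Y be a characteristic subspace of E with respect to f|_E. If Y_s is a linear subspace of Y and W is a linear subspace of G such that Y_s + W is a characteristic subspace of V, then (Y + W)^c ∩ E = Y, where (Y + W)^c is the characteristic hull in V. Moreover, if Y is not hyperinvariant in E with respect to f|_E, then (Y + W)^c is not hyperinvariant in V. -/

import Mathlib

/-!
Let `α` be an automorphism commuting with `f` and `π_E` the projection along `G`. The
compression `π_E ∘ α|_E` is injective: otherwise some `x ≠ 0` in `E ∩ ker f` has `α x ∈ G`,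
and `x`, `α x` have the same height `q`, so `d(f|_E, q+1) ≥ 1` and `d(f|_G, q+1) ≥ 1`. As the
Ulm invariants of `f` are the sums of those of `f|_E` and `f|_G`, this gives `d(f, q+1) > 1`,
hence `d(f|_G, q+1) = d(f, q+1)` and `d(f|_E, q+1) = 0`, a contradiction. So the compression is
an automorphism of `E` commuting with `f|_E`, and it preserves `Y`; that is, `α Y ⊆ Y ⊕ G`.
Since also `α W ⊆ Y_s + W ⊆ Y ⊕ G` and `Y ⊕ G` is `f`-invariant, `(Y + W)^c ⊆ Y ⊕ G`, whose
intersection with `E` is `Y`. Finally, an endomorphism `g` of `E` commuting with `f|_E` extends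
to `ι_E ∘ g ∘ π_E` on `V`, so hyperinvariance of `(Y + W)^c` would pass to `(Y + W)^c ∩ E = Y`.
-/

open Module LinearMap

section Defs

variable {K V : Type*} [Field K] [AddCommGroup V] [Module K V]

/-- `α` commutes with `f`. -/
def Commutes (f : V →ₗ[K] V) (α : V ≃ₗ[K] V) : Prop :=
  ∀ v, α (f v) = f (α v)

/-- `X` is hyperinvariant: invariant under every endomorphism commuting with `f`. -/
def Hyperinv (f : V →ₗ[K] V) (X : Submodule K V) : Prop :=
  ∀ g : V →ₗ[K] V, (∀ v, g (f v) = f (g v)) → ∀ x ∈ X, g x ∈ X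

/-- `X` is characteristic: `f`-invariant and invariant under every automorphism
commuting with `f`. -/
def Charinv (f : V →ₗ[K] V) (X : Submodule K V) : Prop :=
  (∀ x ∈ X, f x ∈ X) ∧ ∀ α : V ≃ₗ[K] V, Commutes f α → ∀ x ∈ X, α x ∈ X

/-- The characteristic hull of a set `B`: the subspace spanned by all
`f^i (α b)`, `b ∈ B`, `α` an automorphism commuting with `f`. -/
def charHull (f : V →ₗ[K] V) (B : Set V) : Submodule K V :=
  Submodule.span K
    {y | ∃ b ∈ B, ∃ i : ℕ, ∃ α : V ≃ₗ[K] V, Commutes f α ∧ y = (f ^ i) (α b)}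

/-- The `f`-cyclic subspace generated by `x`. -/
def cyc (f : V →ₗ[K] V) (x : V) : Submodule K V :=
  Submodule.span K (Set.range fun i : ℕ => (f ^ i) x)

/-- The `f`-invariant span of a set `B`. -/
def invSpan (f : V →ₗ[K] V) (B : Set V) : Submodule K V :=
  Submodule.span K {y | ∃ b ∈ B, ∃ i : ℕ, y = (f ^ i) b}

/-- The exponent of `x`: the least `ℓ` with `f^ℓ x = 0`. -/
noncomputable def expnt (f : V →ₗ[K] V) (x : V) : ℕ :=
  sInf {ℓ : ℕ | (f ^ ℓ) x = 0}

/-- The height of `x`: the largest `q` with `x ∈ f^q V`. -/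
noncomputable def hgt (f : V →ₗ[K] V) (x : V) : ℕ :=
  sSup {q : ℕ | x ∈ LinearMap.range (f ^ q)}

/-- `u` is a generator of `V`: `V = ⟨u⟩ ⊕ V₂` for some `f`-invariant `V₂`. -/
def IsGenerator (f : V →ₗ[K] V) (u : V) : Prop :=
  u ≠ 0 ∧ ∃ V₂ : Submodule K V, (∀ x ∈ V₂, f x ∈ V₂) ∧ IsCompl (cyc f u) V₂

/-- `(u 0, …, u (m-1))` is a generator tuple of `V`:
`V = ⟨u 0⟩ ⊕ ⋯ ⊕ ⟨u (m-1)⟩` with nondecreasing exponents. -/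
def IsGenTuple {m : ℕ} (f : V →ₗ[K] V) (u : Fin m → V) : Prop :=
  DirectSum.IsInternal (fun i => cyc f (u i)) ∧ Monotone fun i => expnt f (u i)

/-- The Ulm invariant `d(f,r) = dim ((ker f ⊓ f^{r-1} V) / (ker f ⊓ f^r V))`. -/
noncomputable def ulm (f : V →ₗ[K] V) (r : ℕ) : ℕ :=
  Module.finrank K
    (↥(LinearMap.ker f ⊓ LinearMap.range (f ^ (r - 1))) ⧸
      Submodule.comap (LinearMap.ker f ⊓ LinearMap.range (f ^ (r - 1))).subtype
        (LinearMap.ker f ⊓ LinearMap.range (f ^ r)))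

/-- The largest hyperinvariant subspace contained in `X`
(the sum of all hyperinvariant subspaces contained in `X`). -/
noncomputable def largestHyperinv (f : V →ₗ[K] V) (X : Submodule K V) : Submodule K V :=
  sSup {W : Submodule K V | Hyperinv f W ∧ W ≤ X}

end Defs

namespace Commutes

variable {K V : Type*} [Field K] [AddCommGroup V] [Module K V] {f : V →ₗ[K] V} {α : V ≃ₗ[K] V}

lemma pow_apply (hα : Commutes f α) (q : ℕ) (v : V) : α ((f ^ q) v) = (f ^ q) (α v) :=
  LinearMap.congr_fun
    ((show Commute (α : Module.End K V) f from LinearMap.ext hα).pow_right q).eq v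

lemma symm (hα : Commutes f α) : Commutes f α.symm := fun v =>
  α.injective (by rw [α.apply_symm_apply, hα, α.apply_symm_apply])

lemma mem_range_pow_iff (hα : Commutes f α) {q : ℕ} {v : V} :
    α v ∈ range (f ^ q) ↔ v ∈ range (f ^ q) := by
  constructor
  · rintro ⟨w, hw⟩
    exact ⟨α.symm w, by rw [← hα.symm.pow_apply, hw, α.symm_apply_apply]⟩
  · rintro ⟨w, rfl⟩
    exact ⟨α w, (hα.pow_apply q w).symm⟩

lemma hgt_apply (hα : Commutes f α) (v : V) : hgt f (α v) = hgt f v := by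
  simp only [hgt, hα.mem_range_pow_iff]

end Commutes

section Nilpotent

variable {K V : Type*} [Field K] [AddCommGroup V] [Module K V] {f : V →ₗ[K] V}

lemma exists_mem_ne_zero_and_apply_eq_zero (hf : IsNilpotent f) {N : Submodule K V}
    (hN : ∀ x ∈ N, f x ∈ N) {x : V} (hxN : x ∈ N) (hx : x ≠ 0) :
    ∃ y ∈ N, y ≠ 0 ∧ f y = 0 := by
  classical
  obtain ⟨n, hn⟩ := hf
  have hex : ∃ k, (f ^ k) x = 0 := ⟨n, by rw [hn]; rfl⟩
  have hk : Nat.find hex ≠ 0 := fun h => hx (by simpa [h] using Nat.find_spec hex)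
  refine ⟨(f ^ (Nat.find hex - 1)) x, Module.End.pow_apply_mem_of_forall_mem _ hN x hxN,
    Nat.find_min hex (by omega), ?_⟩
  rw [← Module.End.mul_apply, ← pow_succ', Nat.sub_add_cancel (Nat.pos_of_ne_zero hk)]
  exact Nat.find_spec hex

lemma hgt_spec (hf : IsNilpotent f) {x : V} (hx : x ≠ 0) :
    x ∈ range (f ^ hgt f x) ∧ x ∉ range (f ^ (hgt f x + 1)) := by
  obtain ⟨n, hn⟩ := hf
  have hbdd : BddAbove {q : ℕ | x ∈ range (f ^ q)} := by
    refine ⟨n, fun q hq => ?_⟩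
    obtain ⟨w, hw⟩ := hq
    by_contra! hnq
    rw [pow_eq_zero_of_le hnq.le hn] at hw
    exact hx hw.symm
  have hne : {q : ℕ | x ∈ range (f ^ q)}.Nonempty := ⟨0, by simp⟩
  exact ⟨Nat.sSup_mem hne hbdd,
    fun h => (le_csSup hbdd h).not_gt (Nat.lt_succ_self _)⟩

end Nilpotent

section Ulm

variable {K V : Type*} [Field K] [AddCommGroup V] [Module K V]

lemma ker_inf_range_pow_succ_le (h : Module.End K V) (q : ℕ) :
    ker h ⊓ range (h ^ (q + 1)) ≤ ker h ⊓ range (h ^ q) := by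
  rw [pow_succ, Module.End.mul_eq_comp]
  exact inf_le_inf_left _ (range_comp_le_range _ _)

lemma ulm_succ_eq_sub [FiniteDimensional K V] (h : Module.End K V) (q : ℕ) :
    ulm h (q + 1) =
      finrank K ↥(ker h ⊓ range (h ^ q)) - finrank K ↥(ker h ⊓ range (h ^ (q + 1))) := by
  rw [ulm, Nat.add_sub_cancel, Submodule.finrank_quotient,
    (Submodule.comapSubtypeEquivOfLe (ker_inf_range_pow_succ_le h q)).finrank_eq]

lemma one_le_ulm_succ [FiniteDimensional K V] (h : Module.End K V) {q : ℕ} {x : V} (hx : h x = 0)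
    (hq : x ∈ range (h ^ q)) (hq' : x ∉ range (h ^ (q + 1))) : 1 ≤ ulm h (q + 1) := by
  have hlt : ker h ⊓ range (h ^ (q + 1)) < ker h ⊓ range (h ^ q) :=
    SetLike.lt_iff_le_and_exists.mpr
      ⟨ker_inf_range_pow_succ_le h q, x, Submodule.mem_inf.mpr ⟨hx, hq⟩,
        fun hx' => hq' (Submodule.mem_inf.mp hx').2⟩
  have := Submodule.finrank_lt_finrank_of_lt hlt
  rw [ulm_succ_eq_sub]
  omega

end Ulm

section Complement

variable {K V : Type*} [Field K] [AddCommGroup V] [Module K V] {f : V →ₗ[K] V}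
  {E G : Submodule K V}

lemma commute_projection (hE : ∀ x ∈ E, f x ∈ E) (hG : ∀ x ∈ G, f x ∈ G)
    (hcompl : IsCompl E G) : Commute (E.projection G hcompl) f :=
  (LinearMap.IsIdempotentElem.commute_iff (Submodule.isIdempotentElem_projection hcompl)).mpr
    ⟨by rw [Submodule.range_projection]; exact hE, by rw [Submodule.ker_projection]; exact hG⟩

lemma projectionOnto_map_apply (hE : ∀ x ∈ E, f x ∈ E) (hG : ∀ x ∈ G, f x ∈ G)
    (hcompl : IsCompl E G) (v : V) :
    E.projectionOnto G hcompl (f v) = f.restrict hE (E.projectionOnto G hcompl v) :=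
  Subtype.ext (LinearMap.congr_fun (commute_projection hE hG hcompl).eq v)

lemma coe_restrict_pow_apply (hE : ∀ x ∈ E, f x ∈ E) (q : ℕ) (x : E) :
    (((f.restrict hE) ^ q) x : V) = (f ^ q) x := by
  rw [Module.End.pow_restrict, LinearMap.coe_restrict_apply]

lemma mem_range_restrict_pow_iff (hE : ∀ x ∈ E, f x ∈ E) (hG : ∀ x ∈ G, f x ∈ G)
    (hcompl : IsCompl E G) {q : ℕ} (x : E) :
    x ∈ range ((f.restrict hE) ^ q) ↔ (x : V) ∈ range (f ^ q) := by
  constructor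
  · rintro ⟨y, rfl⟩
    exact ⟨y, (coe_restrict_pow_apply hE q y).symm⟩
  · rintro ⟨v, hv⟩
    refine ⟨E.projectionOnto G hcompl v, Subtype.ext ?_⟩
    calc (((f.restrict hE) ^ q) (E.projectionOnto G hcompl v) : V)
        = E.projection G hcompl ((f ^ q) v) := by
          rw [coe_restrict_pow_apply]
          exact (LinearMap.congr_fun ((commute_projection hE hG hcompl).pow_right q).eq v).symm
      _ = x := by rw [hv, Submodule.projection_apply_left]

lemma comap_subtype_ker_inf_range_pow (hE : ∀ x ∈ E, f x ∈ E) (hG : ∀ x ∈ G, f x ∈ G)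
    (hcompl : IsCompl E G) (q : ℕ) :
    (ker f ⊓ range (f ^ q)).comap E.subtype =
      ker (f.restrict hE) ⊓ range ((f.restrict hE) ^ q) := by
  ext x
  simp [mem_range_restrict_pow_iff hE hG hcompl, Subtype.ext_iff, LinearMap.coe_restrict_apply]

lemma inf_sup_inf_eq_of_projection_mem (hcompl : IsCompl E G) {X : Submodule K V}
    (hX : ∀ x ∈ X, E.projection G hcompl x ∈ X) : E ⊓ X ⊔ G ⊓ X = X := by
  refine le_antisymm (sup_le inf_le_right inf_le_right) fun x hx => ?_
  rw [← Submodule.projection_add_projection_eq_self hcompl x]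
  refine Submodule.add_mem_sup ⟨Submodule.projection_apply_mem _ _, hX x hx⟩
    ⟨Submodule.projection_apply_mem _ _, ?_⟩
  rw [Submodule.projection_eq_self_sub_projection hcompl]
  exact sub_mem hx (hX x hx)

lemma finrank_ker_inf_range_pow_eq_add [FiniteDimensional K V] (hE : ∀ x ∈ E, f x ∈ E)
    (hG : ∀ x ∈ G, f x ∈ G) (hcompl : IsCompl E G) (q : ℕ) :
    finrank K ↥(ker f ⊓ range (f ^ q)) =
      finrank K ↥(ker (f.restrict hE) ⊓ range ((f.restrict hE) ^ q)) +
        finrank K ↥(ker (f.restrict hG) ⊓ range ((f.restrict hG) ^ q)) := by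
  have hP := commute_projection hE hG hcompl
  have hX : ∀ x ∈ ker f ⊓ range (f ^ q), E.projection G hcompl x ∈ ker f ⊓ range (f ^ q) := by
    rintro x ⟨hx, w, rfl⟩
    refine ⟨?_, E.projection G hcompl w, (LinearMap.congr_fun (hP.pow_right q).eq w).symm⟩
    show f (E.projection G hcompl ((f ^ q) w)) = 0
    rw [← Module.End.mul_apply, ← hP.eq, Module.End.mul_apply, mem_ker.mp hx, map_zero]
  have hdisj : E ⊓ (ker f ⊓ range (f ^ q)) ⊓ (G ⊓ (ker f ⊓ range (f ^ q))) = ⊥ :=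
    disjoint_iff.mp (hcompl.disjoint.mono inf_le_left inf_le_left)
  rw [← comap_subtype_ker_inf_range_pow hE hG hcompl, ← comap_subtype_ker_inf_range_pow hG hE
    hcompl.symm, ← Submodule.finrank_map_subtype_eq, ← Submodule.finrank_map_subtype_eq,
    Submodule.map_comap_subtype, Submodule.map_comap_subtype,
    ← Submodule.finrank_sup_add_finrank_inf_eq, hdisj, inf_sup_inf_eq_of_projection_mem hcompl hX,
    finrank_bot, add_zero]

lemma ulm_succ_eq_add [FiniteDimensional K V] (hE : ∀ x ∈ E, f x ∈ E) (hG : ∀ x ∈ G, f x ∈ G)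
    (hcompl : IsCompl E G) (q : ℕ) :
    ulm f (q + 1) = ulm (f.restrict hE) (q + 1) + ulm (f.restrict hG) (q + 1) := by
  have hmonoE := Submodule.finrank_mono (ker_inf_range_pow_succ_le (f.restrict hE) q)
  have hmonoG := Submodule.finrank_mono (ker_inf_range_pow_succ_le (f.restrict hG) q)
  rw [ulm_succ_eq_sub, ulm_succ_eq_sub, ulm_succ_eq_sub,
    finrank_ker_inf_range_pow_eq_add hE hG hcompl, finrank_ker_inf_range_pow_eq_add hE hG hcompl]
  omega

lemma one_le_ulm_restrict_hgt_succ [FiniteDimensional K V] (hf : IsNilpotent f)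
    (hE : ∀ x ∈ E, f x ∈ E) (hG : ∀ x ∈ G, f x ∈ G) (hcompl : IsCompl E G) {x : V}
    (hxE : x ∈ E) (hx : x ≠ 0) (hfx : f x = 0) : 1 ≤ ulm (f.restrict hE) (hgt f x + 1) := by
  obtain ⟨hq, hq'⟩ := hgt_spec hf hx
  exact one_le_ulm_succ _ (x := ⟨x, hxE⟩) (Subtype.ext hfx)
    ((mem_range_restrict_pow_iff hE hG hcompl _).mpr hq)
    fun h => hq' ((mem_range_restrict_pow_iff hE hG hcompl _).mp h)

lemma comap_subtype_eq_of_inf_eq_map {H : Submodule K V} {Y : Submodule K E}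
    (h : H ⊓ E = Y.map E.subtype) : H.comap E.subtype = Y := by
  rw [← Submodule.comap_map_eq_of_injective E.injective_subtype Y, ← h, Submodule.comap_inf,
    Submodule.comap_subtype_self, inf_top_eq]

lemma mem_map_subtype_sup_iff (hcompl : IsCompl E G) {Y : Submodule K E} {v : V} :
    v ∈ Y.map E.subtype ⊔ G ↔ E.projectionOnto G hcompl v ∈ Y := by
  constructor
  · intro hv
    obtain ⟨_, ⟨y, hy, rfl⟩, w, hw, rfl⟩ := Submodule.mem_sup.mp hv
    simpa [Submodule.projectionOnto_apply_of_mem_right hcompl hw] using hy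
  · intro hv
    rw [← Submodule.projection_add_projection_eq_self hcompl v]
    exact Submodule.add_mem_sup ⟨_, hv, rfl⟩ (Submodule.projection_apply_mem _ _)

lemma Hyperinv.comap_subtype (hE : ∀ x ∈ E, f x ∈ E) (hG : ∀ x ∈ G, f x ∈ G)
    (hcompl : IsCompl E G) {X : Submodule K V} (hX : Hyperinv f X) :
    Hyperinv (f.restrict hE) (X.comap E.subtype) := by
  intro g hg y hy
  have hext : ∀ v, (E.subtype ∘ₗ g ∘ₗ E.projectionOnto G hcompl) (f v) =
      f ((E.subtype ∘ₗ g ∘ₗ E.projectionOnto G hcompl) v) := by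
    intro v
    simp [projectionOnto_map_apply hE hG hcompl, hg, LinearMap.coe_restrict_apply]
  simpa using hX _ hext _ hy

end Complement

section Compression

variable {K V : Type*} [Field K] [AddCommGroup V] [Module K V] {f : V →ₗ[K] V}
  {E G : Submodule K V}

noncomputable def compression (hcompl : IsCompl E G) (g : V →ₗ[K] V) : E →ₗ[K] E :=
  E.projectionOnto G hcompl ∘ₗ g ∘ₗ E.subtype

lemma compression_restrict_apply (hE : ∀ x ∈ E, f x ∈ E) (hG : ∀ x ∈ G, f x ∈ G)
    (hcompl : IsCompl E G) {g : V →ₗ[K] V} (hg : ∀ v, g (f v) = f (g v)) (x : E) :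
    compression hcompl g (f.restrict hE x) = f.restrict hE (compression hcompl g x) := by
  simp only [compression, LinearMap.comp_apply, Submodule.subtype_apply,
    LinearMap.coe_restrict_apply, hg, projectionOnto_map_apply hE hG hcompl]

lemma injective_compression [FiniteDimensional K V] (hf : IsNilpotent f)
    (hE : ∀ x ∈ E, f x ∈ E) (hG : ∀ x ∈ G, f x ∈ G) (hcompl : IsCompl E G)
    (hdG : ∀ t, 1 ≤ t → 1 < ulm f t → ulm (f.restrict hG) t = ulm f t)
    {α : V ≃ₗ[K] V} (hα : Commutes f α) :
    Function.Injective (compression hcompl (α : V →ₗ[K] V)) := by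
  rw [← ker_eq_bot, Submodule.eq_bot_iff]
  intro z hz
  by_contra hz0
  obtain ⟨x, ⟨hxE, hxG⟩, hx0, hfx⟩ := exists_mem_ne_zero_and_apply_eq_zero hf
    (N := E ⊓ G.comap (α : V →ₗ[K] V))
    (fun v ⟨hvE, hvG⟩ => ⟨hE v hvE, show α (f v) ∈ G by rw [hα]; exact hG _ hvG⟩)
    ⟨z.2, (Submodule.projectionOnto_apply_eq_zero_iff hcompl).mp hz⟩
    (fun h => hz0 (Subtype.ext h))
  have hαxG : α x ∈ G := hxG
  have hfαx : f (α x) = 0 := by rw [← hα, hfx, map_zero]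
  have hE1 := one_le_ulm_restrict_hgt_succ hf hE hG hcompl hxE hx0 hfx
  have hG1 := one_le_ulm_restrict_hgt_succ hf hG hE hcompl.symm hαxG
    (α.map_ne_zero_iff.mpr hx0) hfαx
  rw [hα.hgt_apply] at hG1
  have hsum := ulm_succ_eq_add hE hG hcompl (hgt f x)
  have := hdG (hgt f x + 1) (Nat.le_add_left 1 _) (by omega)
  omega

lemma Charinv.compression_apply_mem [FiniteDimensional K V] (hf : IsNilpotent f)
    (hE : ∀ x ∈ E, f x ∈ E) (hG : ∀ x ∈ G, f x ∈ G) (hcompl : IsCompl E G)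
    (hdG : ∀ t, 1 ≤ t → 1 < ulm f t → ulm (f.restrict hG) t = ulm f t)
    {Y : Submodule K E} (hY : Charinv (f.restrict hE) Y) {α : V ≃ₗ[K] V} (hα : Commutes f α)
    {y : E} (hy : y ∈ Y) : compression hcompl (α : V →ₗ[K] V) y ∈ Y :=
  hY.2 (.ofInjectiveEndo _ (injective_compression hf hE hG hcompl hdG hα))
    (compression_restrict_apply hE hG hcompl hα) y hy

end Compression

section CharacteristicHull

variable {K V : Type*} [Field K] [AddCommGroup V] [Module K V] {f : V →ₗ[K] V}

lemma subset_charHull (B : Set V) : B ⊆ charHull f B := fun b hb =>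
  Submodule.subset_span ⟨b, hb, 0, LinearEquiv.refl K V, fun _ => rfl, by simp⟩

lemma charHull_le {B : Set V} {X : Submodule K V} (hX : ∀ x ∈ X, f x ∈ X)
    (hB : ∀ α, Commutes f α → ∀ b ∈ B, α b ∈ X) : charHull f B ≤ X := by
  refine Submodule.span_le.mpr ?_
  rintro _ ⟨b, hb, i, α, hα, rfl⟩
  exact Module.End.pow_apply_mem_of_forall_mem i hX _ (hB α hα b hb)

end CharacteristicHull

theorem stmt16_general {K V : Type*} [Field K] [AddCommGroup V] [Module K V]
    [FiniteDimensional K V] (f : V →ₗ[K] V) (hf : IsNilpotent f)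
    (E G : Submodule K V) (hE : ∀ x ∈ E, f x ∈ E) (hG : ∀ x ∈ G, f x ∈ G)
    (hcompl : IsCompl E G)
    (hdG : ∀ t, 1 ≤ t → 1 < ulm f t → ulm (f.restrict hG) t = ulm f t)
    (Y : Submodule K E) (hY : Charinv (f.restrict hE) Y)
    (Ys : Submodule K E) (hYs : Ys ≤ Y)
    (W : Submodule K V) (hW : W ≤ G)
    (hchar : Charinv f (Submodule.map E.subtype Ys ⊔ W)) :
    charHull f ((Submodule.map E.subtype Y ⊔ W : Submodule K V) : Set V) ⊓ E =
        Submodule.map E.subtype Y ∧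
      (¬ Hyperinv (f.restrict hE) Y →
        ¬ Hyperinv f
          (charHull f ((Submodule.map E.subtype Y ⊔ W : Submodule K V) : Set V))) := by
  set A := Y.map E.subtype
  have hAG (v : V) : v ∈ A ⊔ G ↔ E.projectionOnto G hcompl v ∈ Y :=
    mem_map_subtype_sup_iff hcompl
  have hle : charHull f ↑(A ⊔ W) ≤ A ⊔ G := by
    refine charHull_le (fun v hv => (hAG _).mpr ?_) fun α hα v hv => ?_
    · rw [projectionOnto_map_apply hE hG hcompl]
      exact hY.1 _ ((hAG v).mp hv)
    · obtain ⟨_, ⟨y, hy, rfl⟩, w, hw, rfl⟩ := Submodule.mem_sup.mp hv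
      rw [map_add]
      exact add_mem ((hAG _).mpr (hY.compression_apply_mem hf hE hG hcompl hdG hα hy))
        (sup_le_sup (Submodule.map_mono hYs) hW (hchar.2 α hα w (Submodule.mem_sup_right hw)))
  have hhull : charHull f ↑(A ⊔ W) ⊓ E = A := by
    refine le_antisymm ?_ (le_inf (fun v hv => subset_charHull _ (Submodule.mem_sup_left hv))
      (Submodule.map_subtype_le E Y))
    calc charHull f ↑(A ⊔ W) ⊓ E ≤ (A ⊔ G) ⊓ E := inf_le_inf_right _ hle
      _ = A := by
        rw [sup_inf_assoc_of_le _ (Submodule.map_subtype_le E Y), hcompl.symm.inf_eq_bot,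
          sup_bot_eq]
  refine ⟨hhull, fun hY' hhyp => hY' ?_⟩
  rw [← comap_subtype_eq_of_inf_eq_map hhull]
  exact hhyp.comap_subtype hE hG hcompl

theorem stmt16 {K V : Type*} [Field K] [AddCommGroup V] [Module K V]
    [FiniteDimensional K V] (f : V →ₗ[K] V) (hf : IsNilpotent f)
    (E G : Submodule K V) (hE : ∀ x ∈ E, f x ∈ E) (hG : ∀ x ∈ G, f x ∈ G)
    (hcompl : IsCompl E G)
    (hdE : ∀ t, 1 ≤ t → ulm f t = 1 → ulm (f.restrict hE) t = ulm f t)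
    (hdG : ∀ t, 1 ≤ t → 1 < ulm f t → ulm (f.restrict hG) t = ulm f t)
    (Y : Submodule K E) (hY : Charinv (f.restrict hE) Y)
    (Ys : Submodule K E) (hYs : Ys ≤ Y)
    (W : Submodule K V) (hW : W ≤ G)
    (hchar : Charinv f (Submodule.map E.subtype Ys ⊔ W)) :
    charHull f ((Submodule.map E.subtype Y ⊔ W : Submodule K V) : Set V) ⊓ E =
        Submodule.map E.subtype Y ∧
      (¬ Hyperinv (f.restrict hE) Y →
        ¬ Hyperinv f
          (charHull f ((Submodule.map E.subtype Y ⊔ W : Submodule K V) : Set V))) :=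
  stmt16_general f hf E G hE hG hcompl hdG Y hY Ys hYs W hW hchar
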